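/- If S is a finite universal signature, then AX+(S) is a sound and complete axiomatization for the language L(S) with respect to the class of finite GSEMs over S in which every instance of the axioms of AX+(S) is valid. -/

import Mathlib

namespace Causal

/-- A signature: exogenous variables `U`, endogenous variables `V`, a universe
of values `Val`, range functions `RU`, `RV`, and a set `Int` of allowed
interventions (partial assignments of in-range values to endogenous variables). -/
structure Signature : Type 1 where
  U : Type
  V : Type
  Val : Type
  RU : U → Set Val
  RV : V → Set Val
  RU_nonempty : ∀ Y, (RU Y).Nonempty
  RV_nonempty : ∀ X, (RV X).Nonempty
  Int : Set (V → Option Val)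
  Int_ok : ∀ I ∈ Int, ∀ X x, I X = some x → x ∈ RV X

variable {S : Signature}

/-- A finite signature: finitely many variables, each with finite range. -/
def Signature.IsFinite (S : Signature) : Prop :=
  Finite S.U ∧ Finite S.V ∧ (∀ Y, (S.RU Y).Finite) ∧ (∀ X, (S.RV X).Finite)

/-- An intervention is valid if it only sets variables to values in their ranges. -/
def ValidInt (S : Signature) (I : S.V → Option S.Val) : Prop :=
  ∀ X x, I X = some x → x ∈ S.RV X

/-- A universal signature: all (valid) interventions are allowed. -/
def Signature.Universal (S : Signature) : Prop :=
  S.Int = {I | ValidInt S I}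

/-- A context: an assignment of in-range values to the exogenous variables. -/
def Context (S : Signature) : Type := {u : S.U → S.Val // ∀ Y, u Y ∈ S.RU Y}

/-- An assignment of in-range values to the endogenous variables (an outcome). -/
def Assignment (S : Signature) : Type := {v : S.V → S.Val // ∀ X, v X ∈ S.RV X}

open Classical in
/-- `updInt I X x` is the intervention `I; X ← x`. -/
noncomputable def updInt (I : S.V → Option S.Val) (X : S.V) (x : S.Val) :
    S.V → Option S.Val :=
  fun Y => if Y = X then some x else I Y

/-- Events: Boolean combinations of primitive events `X = x` (with `x ∈ R(X)`). -/
inductive Event (S : Signature) : Type where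
  | tru : Event S
  | prim : (X : S.V) → (x : S.Val) → x ∈ S.RV X → Event S
  | not : Event S → Event S
  | and : Event S → Event S → Event S
  | or : Event S → Event S → Event S

namespace Event

def imp (a b : Event S) : Event S := Event.or (Event.not a) b

/-- Satisfaction of an event by an assignment. -/
def sat (v : Assignment S) : Event S → Prop
  | .tru => True
  | .prim X x _ => v.1 X = x
  | .not e => ¬ Event.sat v e
  | .and a b => Event.sat v a ∧ Event.sat v b
  | .or a b => Event.sat v a ∨ Event.sat v b

/-- Boolean evaluation of an event under an arbitrary valuation of its atoms;
used to define propositional tautologies. -/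
def evalB (val : S.V → S.Val → Bool) : Event S → Bool
  | .tru => true
  | .prim X x _ => val X x
  | .not e => !(Event.evalB val e)
  | .and a b => Event.evalB val a && Event.evalB val b
  | .or a b => Event.evalB val a || Event.evalB val b

/-- An event is a propositional tautology if it is true under every Boolean
valuation of its primitive events. -/
def Taut (e : Event S) : Prop := ∀ val, Event.evalB val e = true

/-- The value `x` of variable `X` is mentioned in the event. -/
def mentionsVal (X : S.V) (x : S.Val) : Event S → Prop
  | .tru => False
  | .prim X' x' _ => X' = X ∧ x' = x
  | .not e => Event.mentionsVal X x e
  | .and a b => Event.mentionsVal X x a ∨ Event.mentionsVal X x b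
  | .or a b => Event.mentionsVal X x a ∨ Event.mentionsVal X x b

def bigAnd (l : List (Event S)) : Event S := l.foldr Event.and Event.tru

def bigOr (l : List (Event S)) : Event S := l.foldr Event.or (Event.not Event.tru)

/-- The disjunction `⋁_{x ∈ l} X = x`. -/
def disjEq (X : S.V) (l : List {x : S.Val // x ∈ S.RV X}) : Event S :=
  bigOr (l.map fun x => Event.prim X x.1 x.2)

/-- The conjunction `⋀ X = x` over a list of (variable, value) pairs. -/
def conjEqL (l : List ((X : S.V) × {x : S.Val // x ∈ S.RV X})) : Event S :=
  bigAnd (l.map fun p => Event.prim p.1 p.2.1 p.2.2)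

/-- Conjunctive formulas: conjunctions of literals `X = x` and `X ≠ x`. -/
inductive Conjunctive : Event S → Prop
  | tru : Conjunctive Event.tru
  | eq (X x hx) : Conjunctive (Event.prim X x hx)
  | ne (X x hx) : Conjunctive (Event.not (Event.prim X x hx))
  | and {a b} : Conjunctive a → Conjunctive b → Conjunctive (Event.and a b)

/-- The set of conjuncts of a (conjunctive) formula. -/
def conjuncts : Event S → Set (Event S)
  | .tru => ∅
  | .and a b => Event.conjuncts a ∪ Event.conjuncts b
  | e => {e}

/-- Membership in the restricted language: only named variables and named values. -/
def InLang (W : Set S.V) (R' : S.V → Set S.Val) : Event S → Prop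
  | .tru => True
  | .prim X x _ => X ∈ W ∧ x ∈ R' X
  | .not e => Event.InLang W R' e
  | .and a b => Event.InLang W R' a ∧ Event.InLang W R' b
  | .or a b => Event.InLang W R' a ∧ Event.InLang W R' b

end Event

/-- Causal formulas: Boolean combinations of atomic formulas `[Y ← y]φ`
with `Y ← y` an allowed intervention and `φ` an event. -/
inductive CForm (S : Signature) : Type where
  | tru : CForm S
  | box : (I : S.V → Option S.Val) → I ∈ S.Int → Event S → CForm S
  | not : CForm S → CForm S
  | and : CForm S → CForm S → CForm S
  | or : CForm S → CForm S → CForm S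

namespace CForm

def imp (a b : CForm S) : CForm S := CForm.or (CForm.not a) b

def iff (a b : CForm S) : CForm S := CForm.and (imp a b) (imp b a)

/-- `⟨Y ← y⟩φ` abbreviates `¬[Y ← y]¬φ`. -/
def dia (I : S.V → Option S.Val) (hI : I ∈ S.Int) (e : Event S) : CForm S :=
  CForm.not (CForm.box I hI (Event.not e))

/-- Satisfaction of a causal formula at a context, relative to an outcome map `O`. -/
def sat (O : (I : S.V → Option S.Val) → I ∈ S.Int → Context S → Set (Assignment S))
    (u : Context S) : CForm S → Prop
  | .tru => True
  | .box I hI e => ∀ v ∈ O I hI u, e.sat v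
  | .not φ => ¬ CForm.sat O u φ
  | .and a b => CForm.sat O u a ∧ CForm.sat O u b
  | .or a b => CForm.sat O u a ∨ CForm.sat O u b

/-- Boolean evaluation of a causal formula under an arbitrary valuation of its
atomic formulas; used to define propositional tautologies. -/
def evalB (val : (S.V → Option S.Val) → Event S → Bool) : CForm S → Bool
  | .tru => true
  | .box I _ e => val I e
  | .not φ => !(CForm.evalB val φ)
  | .and a b => CForm.evalB val a && CForm.evalB val b
  | .or a b => CForm.evalB val a || CForm.evalB val b

/-- A causal formula is an instance of a propositional tautology if it is true
under every Boolean valuation of its atomic formulas. -/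
def Taut (φ : CForm S) : Prop := ∀ val, CForm.evalB val φ = true

/-- The value `x` of variable `X` is mentioned in the causal formula
(either in a primitive event or in an intervention). -/
def mentionsVal (X : S.V) (x : S.Val) : CForm S → Prop
  | .tru => False
  | .box I _ e => I X = some x ∨ e.mentionsVal X x
  | .not φ => CForm.mentionsVal X x φ
  | .and a b => CForm.mentionsVal X x a ∨ CForm.mentionsVal X x b
  | .or a b => CForm.mentionsVal X x a ∨ CForm.mentionsVal X x b

def bigAnd (l : List (CForm S)) : CForm S := l.foldr CForm.and CForm.tru

def bigOr (l : List (CForm S)) : CForm S := l.foldr CForm.or (CForm.not CForm.tru)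

/-- Membership in the restricted language `L_{W,R',I'}(S)`. -/
def InLang (W : Set S.V) (R' : S.V → Set S.Val) (I' : Set (S.V → Option S.Val)) :
    CForm S → Prop
  | .tru => True
  | .box I _ e => I ∈ I' ∧ e.InLang W R'
  | .not φ => CForm.InLang W R' I' φ
  | .and a b => CForm.InLang W R' I' a ∧ CForm.InLang W R' I' b
  | .or a b => CForm.InLang W R' I' a ∧ CForm.InLang W R' I' b

end CForm

/-- A structural equations model over `S`: each endogenous variable gets an
equation determining its value from the values of all other variables
(formally, `F X u v` does not depend on `v X`). -/
structure SEM (S : Signature) where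
  F : S.V → (S.U → S.Val) → (S.V → S.Val) → S.Val
  F_range : ∀ X uu vv, F X uu vv ∈ S.RV X
  F_indep_self : ∀ X uu vv vv', (∀ Y, Y ≠ X → vv Y = vv' Y) → F X uu vv = F X uu vv'

namespace SEM

/-- The outcomes of a SEM under an intervention: solutions of the modified equations. -/
def outcomes (M : SEM S) (u : Context S) (I : S.V → Option S.Val) :
    Set (Assignment S) :=
  {v | ∀ X, (∀ x, I X = some x → v.1 X = x) ∧ (I X = none → v.1 X = M.F X u.1 v.1)}

def sat (M : SEM S) (u : Context S) (φ : CForm S) : Prop :=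
  φ.sat (fun I _ u' => M.outcomes u' I) u

def Valid (M : SEM S) (φ : CForm S) : Prop := ∀ u, M.sat u φ

/-- `X` is independent of `Y` in context `uu`: the equation for `X` does not
depend on the value of `Y`. -/
def IndepAt (M : SEM S) (uu : S.U → S.Val) (X Y : S.V) : Prop :=
  ∀ vv vv', (∀ Z, Z ≠ Y → vv Z = vv' Z) → M.F X uu vv = M.F X uu vv'

/-- An acyclic (recursive) SEM. -/
def Acyclic (M : SEM S) : Prop :=
  ∀ u : Context S, ∃ lt : S.V → S.V → Prop, IsStrictTotalOrder S.V lt ∧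
    ∀ X Y, lt X Y → M.IndepAt u.1 X Y

end SEM

/-- A generalized structural equations model: an arbitrary (effective) map from
allowed interventions and contexts to sets of outcomes. -/
structure GSEM (S : Signature) where
  F : (I : S.V → Option S.Val) → I ∈ S.Int → Context S → Set (Assignment S)
  effective : ∀ I hI u v, v ∈ F I hI u → ∀ X x, I X = some x → v.1 X = x

namespace GSEM

def sat (M : GSEM S) (u : Context S) (φ : CForm S) : Prop :=
  φ.sat M.F u

def Valid (M : GSEM S) (φ : CForm S) : Prop := ∀ u, M.sat u φ

/-- A finitary GSEM: all outcome sets are finite. -/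
def Finitary (M : GSEM S) : Prop := ∀ I hI u, (M.F I hI u).Finite

end GSEM

/-- Equivalence of two GSEMs: same outcomes for all contexts and allowed interventions. -/
def GSEM.equiv (M M' : GSEM S) : Prop := ∀ I hI u, M.F I hI u = M'.F I hI u

/-- `L(S)`-equivalence of two GSEMs: they agree on all causal formulas. -/
def GSEM.LEquiv (M M' : GSEM S) : Prop := ∀ u φ, M.sat u φ ↔ M'.sat u φ

/-- Equivalence of a SEM and a GSEM. -/
def SEM.equivGSEM (M : SEM S) (M' : GSEM S) : Prop :=
  ∀ (I : S.V → Option S.Val) (hI : I ∈ S.Int) (u : Context S),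
    M.outcomes u I = M'.F I hI u

/-- The projection of an outcome set to a single variable. -/
def projSet (T : Set (Assignment S)) (Y : S.V) : Set S.Val := (fun v => v.1 Y) '' T

/-- The restriction of an outcome set to a set of variables. -/
def restrictSet (T : Set (Assignment S)) (Wv : Set S.V) : Set (Wv → S.Val) :=
  (fun (v : Assignment S) (Y : Wv) => v.1 Y.1) '' T

/-! ### Axiom schemas -/

/-- D0: all instances of propositional tautologies. -/
def AxD0 (S : Signature) : Set (CForm S) := {φ | φ.Taut}

/-- D1 (functionality): `[Y ← y](X = x ⇒ X ≠ x')` for `x ≠ x'`. -/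
def AxD1 (S : Signature) : Set (CForm S) :=
  {φ | ∃ (I : S.V → Option S.Val) (hI : I ∈ S.Int) (X : S.V) (x x' : S.Val)
      (hx : x ∈ S.RV X) (hx' : x' ∈ S.RV X), x ≠ x' ∧
    φ = CForm.box I hI (Event.imp (Event.prim X x hx) (Event.not (Event.prim X x' hx')))}

/-- D2 (definiteness): `[Y ← y](⋁_{x ∈ R(X)} X = x)`. -/
def AxD2 (S : Signature) : Set (CForm S) :=
  {φ | ∃ (I : S.V → Option S.Val) (hI : I ∈ S.Int) (X : S.V)
      (l : List {x : S.Val // x ∈ S.RV X}),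
    (∀ x : {x : S.Val // x ∈ S.RV X}, x ∈ l) ∧ φ = CForm.box I hI (Event.disjEq X l)}

/-- D3 (composition): `⟨X ← x⟩(W = w ∧ φ) ⇒ ⟨X ← x; W ← w⟩φ`. -/
def AxD3 (S : Signature) : Set (CForm S) :=
  {ψ | ∃ (I : S.V → Option S.Val) (hI : I ∈ S.Int) (W : S.V) (w : S.Val)
      (hw : w ∈ S.RV W) (hIW : updInt I W w ∈ S.Int) (e : Event S),
    ψ = CForm.imp (CForm.dia I hI (Event.and (Event.prim W w hw) e))
          (CForm.dia (updInt I W w) hIW e)}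

/-- D4 (effectiveness): `[X ← x](X = x)`. -/
def AxD4 (S : Signature) : Set (CForm S) :=
  {φ | ∃ (I : S.V → Option S.Val) (hI : I ∈ S.Int) (X : S.V) (x : S.Val)
      (hx : x ∈ S.RV X), I X = some x ∧ φ = CForm.box I hI (Event.prim X x hx)}

/-- D5 (reversibility), with `Z = V − (X ∪ {W, Y})`. -/
def AxD5 (S : Signature) : Set (CForm S) :=
  {φ | ∃ (I : S.V → Option S.Val) (hI : I ∈ S.Int) (Y : S.V) (y : S.Val)
      (hy : y ∈ S.RV Y) (W : S.V) (w : S.Val) (hw : w ∈ S.RV W)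
      (hIY : updInt I Y y ∈ S.Int) (hIW : updInt I W w ∈ S.Int)
      (lZ : List ((X : S.V) × {x : S.Val // x ∈ S.RV X})),
    (lZ.map Sigma.fst).Nodup ∧
    (∀ Z : S.V, (∃ p ∈ lZ, p.1 = Z) ↔ (I Z = none ∧ Z ≠ W ∧ Z ≠ Y)) ∧
    φ = CForm.imp
      (CForm.and
        (CForm.dia (updInt I Y y) hIY (Event.and (Event.prim W w hw) (Event.conjEqL lZ)))
        (CForm.dia (updInt I W w) hIW (Event.and (Event.prim Y y hy) (Event.conjEqL lZ))))
      (CForm.dia I hI (Event.and (Event.prim W w hw)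
        (Event.and (Event.prim Y y hy) (Event.conjEqL lZ))))}

/-- A disjunct of the formula `Y ⇝ Z` ("Y affects Z"). -/
noncomputable def ltComp (I : S.V → Option S.Val) (hI : I ∈ S.Int) (Y : S.V) (y : S.Val)
    (hIY : updInt I Y y ∈ S.Int) (Z : S.V) (z z' : S.Val)
    (hz : z ∈ S.RV Z) (hz' : z' ∈ S.RV Z) : CForm S :=
  CForm.and (CForm.box I hI (Event.prim Z z hz))
    (CForm.box (updInt I Y y) hIY (Event.prim Z z' hz'))

/-- `φ` is (an instance of) the formula `Y ⇝ Z`: the disjunction, over all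
interventions `X ← x`, values `y ∈ R(Y)` and `z ≠ z' ∈ R(Z)`, of
`[X ← x](Z = z) ∧ [X ← x; Y ← y](Z = z')`. -/
def IsLeadsTo (Y Z : S.V) (φ : CForm S) : Prop :=
  ∃ l : List (CForm S),
    (∀ ψ ∈ l, ∃ (I : S.V → Option S.Val) (hI : I ∈ S.Int) (y : S.Val)
        (_ : y ∈ S.RV Y) (hIY : updInt I Y y ∈ S.Int) (z z' : S.Val)
        (hz : z ∈ S.RV Z) (hz' : z' ∈ S.RV Z), z ≠ z' ∧
        ψ = ltComp I hI Y y hIY Z z z' hz hz') ∧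
    (∀ (I : S.V → Option S.Val) (hI : I ∈ S.Int) (y : S.Val), y ∈ S.RV Y →
      ∀ (hIY : updInt I Y y ∈ S.Int) (z z' : S.Val) (hz : z ∈ S.RV Z)
        (hz' : z' ∈ S.RV Z), z ≠ z' →
        ltComp I hI Y y hIY Z z z' hz hz' ∈ l) ∧
    φ = CForm.bigOr l

/-- D6 (recursiveness): `(X₀ ⇝ X₁ ∧ … ∧ X_{k−1} ⇝ X_k) ⇒ ¬(X_k ⇝ X₀)`. -/
def AxD6 (S : Signature) : Set (CForm S) :=
  {φ | ∃ (k : ℕ) (Xs : Fin (k+1) → S.V) (fs : Fin k → CForm S) (g : CForm S),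
    (∀ i : Fin k, IsLeadsTo (Xs i.castSucc) (Xs i.succ) (fs i)) ∧
    IsLeadsTo (Xs (Fin.last k)) (Xs 0) g ∧
    φ = CForm.imp (CForm.bigAnd (List.ofFn fs)) (CForm.not g)}

/-- D7 (distribution): `([X ← x]φ ∧ [X ← x](φ ⇒ ψ)) ⇒ [X ← x]ψ`. -/
def AxD7 (S : Signature) : Set (CForm S) :=
  {φ | ∃ (I : S.V → Option S.Val) (hI : I ∈ S.Int) (a b : Event S),
    φ = CForm.imp (CForm.and (CForm.box I hI a) (CForm.box I hI (Event.imp a b)))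
          (CForm.box I hI b)}

/-- D8 (generalization): `[X ← x]φ` for `φ` a propositional tautology. -/
def AxD8 (S : Signature) : Set (CForm S) :=
  {φ | ∃ (I : S.V → Option S.Val) (hI : I ∈ S.Int) (e : Event S), e.Taut ∧
    φ = CForm.box I hI e}

/-- D9 (unique outcomes for `V − {X}`): `⟨Y ← y⟩true ∧ (⟨Y ← y⟩φ ⇒ [Y ← y]φ)`
for `Y = V − {X}`. -/
def AxD9 (S : Signature) : Set (CForm S) :=
  {φ | ∃ (I : S.V → Option S.Val) (hI : I ∈ S.Int) (X : S.V) (e : Event S),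
    I X = none ∧ (∀ Z, Z ≠ X → I Z ≠ none) ∧
    φ = CForm.and (CForm.dia I hI Event.tru)
          (CForm.imp (CForm.dia I hI e) (CForm.box I hI e))}

/-- Halpern's version of D9: `⟨Y ← y⟩true ∧ ⋁_{x ∈ R(X)} [Y ← y](X = x)`
for `Y = V − {X}`. -/
def AxHD9 (S : Signature) : Set (CForm S) :=
  {φ | ∃ (I : S.V → Option S.Val) (hI : I ∈ S.Int) (X : S.V)
      (l : List {x : S.Val // x ∈ S.RV X}),
    I X = none ∧ (∀ Z, Z ≠ X → I Z ≠ none) ∧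
    (∀ x : {x : S.Val // x ∈ S.RV X}, x ∈ l) ∧
    φ = CForm.and (CForm.dia I hI Event.tru)
          (CForm.bigOr (l.map fun x => CForm.box I hI (Event.prim X x.1 x.2)))}

/-- D10(a) (at least one outcome): `⟨Y ← y⟩true`. -/
def AxD10a (S : Signature) : Set (CForm S) :=
  {φ | ∃ (I : S.V → Option S.Val) (hI : I ∈ S.Int), φ = CForm.dia I hI Event.tru}

/-- D10(b) (at most one outcome): `⟨Y ← y⟩φ ⇒ [Y ← y]φ`. -/
def AxD10b (S : Signature) : Set (CForm S) :=
  {φ | ∃ (I : S.V → Option S.Val) (hI : I ∈ S.Int) (e : Event S),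
    φ = CForm.imp (CForm.dia I hI e) (CForm.box I hI e)}

/-! ### The axiom schema D6⁺ -/

/-- `X_{-i} = ȳ` : the conjunction of `X_j = g j` over the indices `j ≠ i`. -/
def Event.conjEqVec {k : ℕ} (Xs : Fin k → S.V)
    (g : ∀ j : Fin k, {x : S.Val // x ∈ S.RV (Xs j)}) (i : Fin k) : Event S :=
  Event.bigAnd (((List.finRange k).filter (fun j => j ≠ i)).map
    fun j => Event.prim (Xs j) (g j).1 (g j).2)

/-- A disjunct of the formula `X_i ⇝_{I',U₁,…,U_k,X₁,…,X_k} X_{−i}`: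
`[I; X_i ← x](X_{−i} = ȳ) ∧ [I; X_i ← x'](X_{−i} ≠ ȳ)`. -/
noncomputable def affComp {k : ℕ} (Xs : Fin k → S.V) (i : Fin k) (I : S.V → Option S.Val)
    (x x' : {v : S.Val // v ∈ S.RV (Xs i)})
    (hx : updInt I (Xs i) x.1 ∈ S.Int) (hx' : updInt I (Xs i) x'.1 ∈ S.Int)
    (g : ∀ j : Fin k, {v : S.Val // v ∈ S.RV (Xs j)}) : CForm S :=
  CForm.and (CForm.box (updInt I (Xs i) x.1) hx (Event.conjEqVec Xs g i))
    (CForm.box (updInt I (Xs i) x'.1) hx' (Event.not (Event.conjEqVec Xs g i)))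

/-- `φ` is (an instance of) the formula `X_i ⇝_{I',U₁,…,U_k,X₁,…,X_k} X_{−i}`. -/
def IsAffects {k : ℕ} (Xs : Fin k → S.V) (Us : Fin k → Set S.Val)
    (Is : Set (S.V → Option S.Val)) (i : Fin k) (φ : CForm S) : Prop :=
  ∃ l : List (CForm S),
    (∀ ψ ∈ l, ∃ (I : S.V → Option S.Val) (x x' : {v : S.Val // v ∈ S.RV (Xs i)})
        (hx : updInt I (Xs i) x.1 ∈ S.Int) (hx' : updInt I (Xs i) x'.1 ∈ S.Int)
        (g : ∀ j : Fin k, {v : S.Val // v ∈ S.RV (Xs j)}),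
        I ∈ Is ∧ x.1 ∈ Us i ∧ x'.1 ∈ Us i ∧ (∀ j, j ≠ i → (g j).1 ∈ Us j) ∧
        ψ = affComp Xs i I x x' hx hx' g) ∧
    (∀ (I : S.V → Option S.Val), I ∈ Is →
      ∀ (x x' : {v : S.Val // v ∈ S.RV (Xs i)})
        (hx : updInt I (Xs i) x.1 ∈ S.Int) (hx' : updInt I (Xs i) x'.1 ∈ S.Int)
        (g : ∀ j : Fin k, {v : S.Val // v ∈ S.RV (Xs j)}),
        x.1 ∈ Us i → x'.1 ∈ Us i → (∀ j, j ≠ i → (g j).1 ∈ Us j) →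
        affComp Xs i I x x' hx hx' g ∈ l) ∧
    φ = CForm.bigOr l

/-- D6⁺: `⋁_{i=1}^k ¬(X_i ⇝_{I',U₁,…,U_k,X₁,…,X_k} X_{−i})`, one instance for
each finite choice of variables `X₁,…,X_k`, finite value sets `U_i ⊆ R(X_i)`,
and finite set `I'` of allowed interventions. -/
def AxD6p (S : Signature) : Set (CForm S) :=
  {φ | ∃ (k : ℕ) (Xs : Fin k → S.V) (Us : Fin k → Set S.Val)
      (Is : Set (S.V → Option S.Val)) (fs : Fin k → CForm S),
    (∀ j, Us j ⊆ S.RV (Xs j)) ∧ (∀ j, (Us j).Finite) ∧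
    Is ⊆ S.Int ∧ Is.Finite ∧
    (∀ i, IsAffects Xs Us Is i (fs i)) ∧
    φ = CForm.bigOr (List.ofFn fun i => CForm.not (fs i))}

/-! ### Axiom systems and provability -/

def AXplus (S : Signature) : Set (CForm S) :=
  AxD0 S ∪ AxD1 S ∪ AxD2 S ∪ AxD3 S ∪ AxD4 S ∪ AxD5 S ∪ AxD7 S ∪ AxD8 S ∪ AxD9 S

def AXplusRec (S : Signature) : Set (CForm S) :=
  AxD0 S ∪ AxD1 S ∪ AxD2 S ∪ AxD3 S ∪ AxD4 S ∪ AxD6 S ∪ AxD7 S ∪ AxD8 S ∪ AxD9 S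
    ∪ AxD10a S ∪ AxD10b S

def AXbasic (S : Signature) : Set (CForm S) :=
  AxD0 S ∪ AxD1 S ∪ AxD2 S ∪ AxD4 S ∪ AxD7 S ∪ AxD8 S

def AXbasicRec (S : Signature) : Set (CForm S) := AXbasic S ∪ AxD6p S

def AXminus (S : Signature) : Set (CForm S) :=
  AxD0 S ∪ AxD2 S ∪ AxD3 S ∪ AxD6 S ∪ AxD7 S ∪ AxD8 S ∪ AxD10a S ∪ AxD10b S

def AXEQ (S : Signature) : Set (CForm S) :=
  AxD0 S ∪ AxD1 S ∪ AxD2 S ∪ AxD7 S ∪ AxD8 S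

/-- Provability from a set of axioms, with modus ponens. -/
inductive Provable (Ax : Set (CForm S)) : CForm S → Prop
  | ax {φ} : φ ∈ Ax → Provable Ax φ
  | mp {φ ψ} : Provable Ax (CForm.imp φ ψ) → Provable Ax φ → Provable Ax ψ

/-- Provability from a set of axioms, with modus ponens and the inference rule
D2⁺, relative to named variables `W`, named values `R'`, and a language `L`. -/
inductive ProvableStar (Ax : Set (CForm S)) (W : Set S.V) (R' : S.V → Set S.Val)
    (L : Set (CForm S)) : CForm S → Prop
  | ax {φ} : φ ∈ Ax → ProvableStar Ax W R' L φ
  | mp {φ ψ} : ProvableStar Ax W R' L (CForm.imp φ ψ) → ProvableStar Ax W R' L φ →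
      ProvableStar Ax W R' L ψ
  | d2plus {φ : CForm S} {I : S.V → Option S.Val} {hI : I ∈ S.Int} {ψ : Event S}
      {X : S.V} (hXW : X ∈ W)
      (l : List {x : S.Val // x ∈ S.RV X})
      (hsub : ∀ x ∈ l, x.1 ∈ R' X)
      (hmem : ∀ (x : S.Val) (hx : x ∈ S.RV X),
        (CForm.imp φ (CForm.box I hI ψ)).mentionsVal X x →
        (⟨x, hx⟩ : {x : S.Val // x ∈ S.RV X}) ∈ l)
      (hfresh : (∃ x ∈ R' X, ¬ (CForm.imp φ (CForm.box I hI ψ)).mentionsVal X x) →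
        ∃ x ∈ l, ¬ (CForm.imp φ (CForm.box I hI ψ)).mentionsVal X x.1)
      (hL : CForm.imp φ (CForm.box I hI (Event.not ψ)) ∈ L)
      (hprem : ProvableStar Ax W R' L
        (CForm.imp φ (CForm.bigAnd (l.map fun x =>
          CForm.box I hI (Event.imp ψ (Event.not (Event.prim X x.1 x.2)))))))
      : ProvableStar Ax W R' L (CForm.imp φ (CForm.box I hI (Event.not ψ)))

/-! ### Properties of GSEMs -/

/-- Coherence: if `v` is an outcome of `X ← x` and `v` agrees with a finite
extension `X ← x; Y ← y` of the intervention, then `v` is an outcome of the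
extended intervention. -/
def GSEM.Coherent (M : GSEM S) : Prop :=
  ∀ (I₁ : S.V → Option S.Val) (h₁ : I₁ ∈ S.Int) (I₂ : S.V → Option S.Val)
    (h₂ : I₂ ∈ S.Int),
    (∀ X x, I₁ X = some x → I₂ X = some x) →
    {X | I₁ X = none ∧ I₂ X ≠ none}.Finite →
    ∀ (u : Context S) (v : Assignment S), v ∈ M.F I₁ h₁ u →
      (∀ X x, I₂ X = some x → v.1 X = x) → v ∈ M.F I₂ h₂ u

/-- Condition Acyc1 for a GSEM, a context, and a strict order on the variables. -/
def GSEM.Acyc1At (M : GSEM S) (u : Context S) (lt : S.V → S.V → Prop) : Prop :=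
  ∀ (X : S.V) (x x' : S.Val), x ∈ S.RV X → x' ∈ S.RV X →
    ∀ (I : S.V → Option S.Val), I ∈ S.Int →
      ∀ (hx : updInt I X x ∈ S.Int) (hx' : updInt I X x' ∈ S.Int),
        restrictSet (M.F (updInt I X x) hx u) {Y | lt Y X}
          = restrictSet (M.F (updInt I X x') hx' u) {Y | lt Y X}

/-- An acyclic GSEM: for each context there is a total order on the endogenous
variables satisfying Acyc1. -/
def GSEM.Acyclic (M : GSEM S) : Prop :=
  ∀ u : Context S, ∃ lt : S.V → S.V → Prop, IsStrictTotalOrder S.V lt ∧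
    M.Acyc1At u lt

/-! ### Consistency and acceptability -/

/-- A set of formulas is consistent with a provability notion `Pr` if the
negation of the conjunction of no finite subset is provable. -/
def Consistent (Pr : CForm S → Prop) (C : Set (CForm S)) : Prop :=
  ∀ l : List (CForm S), (∀ ψ ∈ l, ψ ∈ C) → ¬ Pr (CForm.not (CForm.bigAnd l))

def MaxConsistent (Pr : CForm S → Prop) (C : Set (CForm S)) : Prop :=
  Consistent Pr C ∧ ∀ ψ ∉ C, ¬ Consistent Pr (insert ψ C)

/-- `C` is acceptable for `⟨Y ← y⟩φ` with respect to `Z`: some conjunctive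
formula `ψ` extends the conjuncts of `φ`, contains a conjunct `Z = z` with `z`
a named value, and `⟨Y ← y⟩ψ ∈ C`. -/
def AcceptableFor (C : Set (CForm S)) (I : S.V → Option S.Val) (hI : I ∈ S.Int)
    (φ : Event S) (R' : S.V → Set S.Val) (Z : S.V) : Prop :=
  ∃ ψ : Event S, ψ.Conjunctive ∧ φ.conjuncts ⊆ ψ.conjuncts ∧
    (∃ (z : S.Val) (hz : z ∈ S.RV Z), z ∈ R' Z ∧ Event.prim Z z hz ∈ ψ.conjuncts) ∧
    CForm.dia I hI ψ ∈ C

end Causal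

/-! Soundness is induction on derivations. For completeness, extend `¬φ` to a maximal
consistent set `Γ` and let the outcomes of `I` in the canonical GSEM be the assignments `v`
with `⟨I⟩(⋀_X X = v(X)) ∈ Γ`. Since the signature is finite, D2 lets any `⟨I⟩g ∈ Γ` be
refined to some `⟨I⟩(⋀_X X = v(X) ∧ g) ∈ Γ`, and the D1 instances `[I](X = v(X) ⇒ X ≠ x)`
force every event `e` with `⟨I⟩(⋀_X X = v(X) ∧ e) ∈ Γ` to hold at `v`; D7 and D8 make `[I]`
closed under propositional consequence, and D4 makes the model effective. Hence the model
satisfies exactly the formulas of `Γ`: it validates every axiom and refutes `φ`. -/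

namespace Causal

variable {S : Signature}

namespace Event

theorem evalB_bigAnd (val : S.V → S.Val → Bool) (l : List (Event S)) :
    (bigAnd l).evalB val = true ↔ ∀ a ∈ l, a.evalB val = true := by
  induction l with
  | nil => simp [bigAnd, evalB]
  | cons a l ih => simp_all [bigAnd, evalB]

theorem evalB_bigOr (val : S.V → S.Val → Bool) (l : List (Event S)) :
    (bigOr l).evalB val = true ↔ ∃ a ∈ l, a.evalB val = true := by
  induction l with
  | nil => simp [bigOr, evalB]
  | cons a l ih => simp_all [bigOr, evalB]

theorem evalB_eq_true_iff_sat {val : S.V → S.Val → Bool} {v : Assignment S}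
    (hval : ∀ X x, x ∈ S.RV X → (val X x = true ↔ v.1 X = x)) (e : Event S) :
    e.evalB val = true ↔ e.sat v := by
  induction e with
  | tru => simp [evalB, sat]
  | prim X x hx => exact hval X x hx
  | not e ih => simp [evalB, sat, ← ih]
  | and a b iha ihb => simp [evalB, sat, iha, ihb]
  | or a b iha ihb => simp [evalB, sat, iha, ihb]

end Event

theorem CForm.evalB_bigAnd (val : (S.V → Option S.Val) → Event S → Bool)
    (l : List (CForm S)) :
    (bigAnd l).evalB val = true ↔ ∀ a ∈ l, a.evalB val = true := by
  induction l with
  | nil => simp [bigAnd, evalB]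
  | cons a l ih => simp_all [bigAnd, evalB]

theorem AxD0_subset_AXbasic : AxD0 S ⊆ AXbasic S := by
  intro φ h
  simp [AXbasic, h]

theorem AXbasic_subset_AXplus : AXbasic S ⊆ AXplus S := by
  intro φ h
  simp only [AXbasic, AXplus, Set.mem_union] at h ⊢
  tauto

variable {Ax Γ : Set (CForm S)}

theorem Provable.of_entails (hAx : AxD0 S ⊆ Ax) {l : List (CForm S)} {c : CForm S}
    (hl : ∀ a ∈ l, Provable Ax a)
    (h : ∀ val, (∀ a ∈ l, a.evalB val = true) → c.evalB val = true) : Provable Ax c := by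
  induction l generalizing c with
  | nil => exact .ax (hAx fun val => h val (by simp))
  | cons a l ih =>
    refine .mp (ih (fun b hb => hl b (.tail a hb)) fun val hval => ?_) (hl a (.head l))
    cases ha : a.evalB val <;> simp_all [CForm.imp, CForm.evalB]

theorem Consistent.exists_evalB (hAx : AxD0 S ⊆ Ax) (hΓ : Consistent (Provable Ax) Γ)
    {l : List (CForm S)} (hl : ∀ a ∈ l, a ∈ Γ) :
    ∃ val, ∀ a ∈ l, a.evalB val = true := by
  by_contra! h
  refine hΓ l hl (.of_entails hAx (l := []) (by simp) fun val _ => ?_)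
  obtain ⟨a, ha, hfalse⟩ := h val
  simp only [CForm.evalB, Bool.not_eq_true', ← Bool.not_eq_true, CForm.evalB_bigAnd]
  exact fun hall => hfalse (hall a ha)

theorem Consistent.insert_or_insert_not (hAx : AxD0 S ⊆ Ax)
    (hΓ : Consistent (Provable Ax) Γ) (ψ : CForm S) :
    Consistent (Provable Ax) (insert ψ Γ) ∨
      Consistent (Provable Ax) (insert (CForm.not ψ) Γ) := by
  classical
  simp only [or_iff_not_imp_left, Consistent, not_forall, not_not]
  rintro ⟨l₁, hl₁, hp₁⟩ l₂ hl₂ hp₂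
  refine hΓ ((l₁ ++ l₂).filter (· ∈ Γ)) (fun a ha => by simpa using (List.mem_filter.mp ha).2)
    (.of_entails hAx (l := [_, _]) (by simpa using ⟨hp₁, hp₂⟩) fun val hval => ?_)
  simp only [List.mem_cons, List.not_mem_nil, or_false, forall_eq_or_imp, forall_eq,
    CForm.evalB, Bool.not_eq_true', ← Bool.not_eq_true, CForm.evalB_bigAnd] at hval ⊢
  intro hfilter
  have hmem : ∀ a ∈ l₁ ++ l₂, a ∈ Γ → a.evalB val = true := fun a ha haΓ =>
    hfilter a (List.mem_filter.mpr ⟨ha, by simpa using haΓ⟩)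
  cases hψ : ψ.evalB val
  · exact hval.2 fun a ha => (hl₂ a ha).elim (fun h => by simp [h, CForm.evalB, hψ])
      (hmem a (by simp [ha]))
  · exact hval.1 fun a ha => (hl₁ a ha).elim (fun h => h ▸ hψ) (hmem a (by simp [ha]))

theorem consistent_singleton_not (hAx : AxD0 S ⊆ Ax) {φ : CForm S} (h : ¬ Provable Ax φ) :
    Consistent (Provable Ax) {CForm.not φ} := by
  intro l hl hp
  refine h (.of_entails hAx (l := [_]) (by simpa using hp) fun val hval => ?_)
  by_contra hφ
  simp only [List.mem_singleton, forall_eq, CForm.evalB, Bool.not_eq_true', ← Bool.not_eq_true,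
    CForm.evalB_bigAnd] at hval
  exact hval fun a ha => by rw [Set.mem_singleton_iff.mp (hl a ha)]; simpa [CForm.evalB] using hφ

theorem exists_maxConsistent_of_not_provable (hAx : AxD0 S ⊆ Ax) {φ : CForm S}
    (h : ¬ Provable Ax φ) : ∃ Γ, MaxConsistent (Provable Ax) Γ ∧ CForm.not φ ∈ Γ := by
  have hchain : ∀ c ⊆ {Γ | Consistent (Provable Ax) Γ}, IsChain (· ⊆ ·) c → c.Nonempty →
      ∃ ub ∈ {Γ | Consistent (Provable Ax) Γ}, ∀ s ∈ c, s ⊆ ub := by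
    refine fun c hc hchain hne => ⟨⋃₀ c, fun l hl => ?_, fun _ => Set.subset_sUnion_of_mem⟩
    obtain ⟨Γ₀, hΓ₀, hlΓ₀⟩ :=
      hchain.directedOn.exists_mem_subset_of_finite_of_subset_sUnion hne l.finite_toSet hl
    exact hc hΓ₀ l hlΓ₀
  obtain ⟨Γ, hsub, hmax⟩ := zorn_subset_nonempty _ hchain _ (consistent_singleton_not hAx h)
  exact ⟨Γ, ⟨hmax.prop, fun ψ hψ hins => hψ (hmax.mem_of_prop_insert hins)⟩, hsub rfl⟩

namespace MaxConsistent

theorem mem_or_not_mem (hAx : AxD0 S ⊆ Ax) (hΓ : MaxConsistent (Provable Ax) Γ)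
    (ψ : CForm S) : ψ ∈ Γ ∨ CForm.not ψ ∈ Γ := by
  by_contra! h
  rcases hΓ.1.insert_or_insert_not hAx ψ with h' | h'
  exacts [hΓ.2 ψ h.1 h', hΓ.2 _ h.2 h']

theorem not_mem_iff (hAx : AxD0 S ⊆ Ax) (hΓ : MaxConsistent (Provable Ax) Γ)
    {ψ : CForm S} : CForm.not ψ ∈ Γ ↔ ψ ∉ Γ := by
  refine ⟨fun hn h => ?_, (hΓ.mem_or_not_mem hAx ψ).resolve_left⟩
  obtain ⟨val, hval⟩ := hΓ.1.exists_evalB hAx (l := [ψ, .not ψ]) (by simp [h, hn])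
  simp [CForm.evalB] at hval

theorem mem_of_entails (hAx : AxD0 S ⊆ Ax) (hΓ : MaxConsistent (Provable Ax) Γ)
    {l : List (CForm S)} {c : CForm S} (hl : ∀ a ∈ l, a ∈ Γ)
    (h : ∀ val, (∀ a ∈ l, a.evalB val = true) → c.evalB val = true) : c ∈ Γ := by
  by_contra hc
  obtain ⟨val, hval⟩ := hΓ.1.exists_evalB hAx (l := .not c :: l)
    (List.forall_mem_cons.mpr ⟨(hΓ.not_mem_iff hAx).mpr hc, hl⟩)
  rw [List.forall_mem_cons] at hval
  simpa [CForm.evalB, h val hval.2] using hval.1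

theorem mem_of_provable (hAx : AxD0 S ⊆ Ax) (hΓ : MaxConsistent (Provable Ax) Γ)
    {c : CForm S} (h : Provable Ax c) : c ∈ Γ := by
  by_contra hc
  refine hΓ.1 [.not c] (by simpa using (hΓ.not_mem_iff hAx).mpr hc)
    (.of_entails hAx (l := [c]) (by simpa) fun val hval => ?_)
  simp_all [CForm.evalB, CForm.bigAnd]

theorem mem_of_imp_mem (hAx : AxD0 S ⊆ Ax) (hΓ : MaxConsistent (Provable Ax) Γ)
    {a b : CForm S} (hab : CForm.imp a b ∈ Γ) (ha : a ∈ Γ) : b ∈ Γ :=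
  hΓ.mem_of_entails hAx (l := [CForm.imp a b, a]) (by simp [hab, ha]) fun val => by
    cases hv : a.evalB val <;> simp_all [CForm.imp, CForm.evalB]

theorem and_mem_iff (hAx : AxD0 S ⊆ Ax) (hΓ : MaxConsistent (Provable Ax) Γ)
    {a b : CForm S} : CForm.and a b ∈ Γ ↔ a ∈ Γ ∧ b ∈ Γ := by
  refine ⟨fun h => ⟨?_, ?_⟩, fun h => ?_⟩
  · exact hΓ.mem_of_entails hAx (l := [_]) (by simpa) fun val => by simp_all [CForm.evalB]
  · exact hΓ.mem_of_entails hAx (l := [_]) (by simpa) fun val => by simp_all [CForm.evalB]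
  · exact hΓ.mem_of_entails hAx (l := [a, b]) (by simpa) fun val => by simp_all [CForm.evalB]

theorem or_mem_iff (hAx : AxD0 S ⊆ Ax) (hΓ : MaxConsistent (Provable Ax) Γ)
    {a b : CForm S} : CForm.or a b ∈ Γ ↔ a ∈ Γ ∨ b ∈ Γ := by
  refine ⟨fun h => ?_, fun h => ?_⟩
  · by_contra! hab
    obtain ⟨val, hval⟩ := hΓ.1.exists_evalB hAx (l := [_, .not a, .not b])
      (by simpa [hΓ.not_mem_iff hAx] using ⟨h, hab⟩)
    simp only [List.mem_cons, List.not_mem_nil, or_false, forall_eq_or_imp, forall_eq,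
      CForm.evalB, Bool.or_eq_true, Bool.not_eq_true'] at hval
    obtain ⟨ha | hb, ha', hb'⟩ := hval <;> simp_all
  · rcases h with h | h <;>
      exact hΓ.mem_of_entails hAx (l := [_]) (by simpa) fun val => by simp_all [CForm.evalB]

theorem mem_of_mem_AXbasic (hAx : AXbasic S ⊆ Ax) (hΓ : MaxConsistent (Provable Ax) Γ)
    {φ : CForm S} (h : φ ∈ AXbasic S) : φ ∈ Γ :=
  hΓ.mem_of_provable (AxD0_subset_AXbasic.trans hAx) (.ax (hAx h))

variable {I : S.V → Option S.Val} {hI : I ∈ S.Int}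

theorem box_of_entails (hAx : AXbasic S ⊆ Ax) (hΓ : MaxConsistent (Provable Ax) Γ)
    {s : Set (Event S)} (hs : s.Finite) (hbox : ∀ a ∈ s, CForm.box I hI a ∈ Γ) {c : Event S}
    (h : ∀ val, (∀ a ∈ s, a.evalB val = true) → c.evalB val = true) :
    CForm.box I hI c ∈ Γ := by
  have h0 := AxD0_subset_AXbasic.trans hAx
  induction s, hs using Set.Finite.induction_on generalizing c with
  | empty =>
    exact hΓ.mem_of_mem_AXbasic hAx (by
      simp [AXbasic, show _ ∈ AxD8 S from ⟨I, hI, c, fun val => h val (by simp), rfl⟩])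
  | @insert a s _ _ ih =>
    have himp : CForm.box I hI (Event.imp a c) ∈ Γ :=
      ih (fun b hb => hbox b (.inr hb)) fun val hval => by
        cases ha : a.evalB val <;> simp_all [Event.imp, Event.evalB]
    have hD7 : CForm.imp (CForm.and (CForm.box I hI a) (CForm.box I hI (Event.imp a c)))
        (CForm.box I hI c) ∈ Γ :=
      hΓ.mem_of_mem_AXbasic hAx (by
        simp [AXbasic, show _ ∈ AxD7 S from ⟨I, hI, a, c, rfl⟩])
    exact hΓ.mem_of_imp_mem h0 hD7 ((hΓ.and_mem_iff h0).2 ⟨hbox a (.inl rfl), himp⟩)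

theorem exists_evalB_of_dia (hAx : AXbasic S ⊆ Ax) (hΓ : MaxConsistent (Provable Ax) Γ)
    {a : Event S} (hd : CForm.dia I hI a ∈ Γ) {s : Set (Event S)} (hs : s.Finite)
    (hbox : ∀ b ∈ s, CForm.box I hI b ∈ Γ) :
    ∃ val, a.evalB val = true ∧ ∀ b ∈ s, b.evalB val = true := by
  by_contra! h
  refine (hΓ.not_mem_iff (AxD0_subset_AXbasic.trans hAx)).mp hd
    (hΓ.box_of_entails hAx hs hbox fun val hval => ?_)
  cases ha : a.evalB val
  · simp [Event.evalB, ha]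
  · obtain ⟨b, hb, hfalse⟩ := h val ha
    exact absurd (hval b hb) hfalse

theorem dia_of_entails (hAx : AXbasic S ⊆ Ax) (hΓ : MaxConsistent (Provable Ax) Γ)
    {a c : Event S} (hd : CForm.dia I hI a ∈ Γ) {s : Set (Event S)} (hs : s.Finite)
    (hbox : ∀ b ∈ s, CForm.box I hI b ∈ Γ)
    (h : ∀ val, a.evalB val = true → (∀ b ∈ s, b.evalB val = true) → c.evalB val = true) :
    CForm.dia I hI c ∈ Γ := by
  by_contra hc
  have hnc : CForm.box I hI (Event.not c) ∈ Γ :=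
    (hΓ.mem_or_not_mem (AxD0_subset_AXbasic.trans hAx) _).resolve_right hc
  obtain ⟨val, ha, hval⟩ := hΓ.exists_evalB_of_dia hAx hd (hs.insert _)
    (Set.forall_mem_insert.mpr ⟨hnc, hbox⟩)
  rw [Set.forall_mem_insert] at hval
  simp [Event.evalB, h val ha hval.2] at hval

end MaxConsistent

namespace Assignment

instance [Finite S.V] [∀ X, Finite (S.RV X)] : Finite (Assignment S) :=
  Finite.of_equiv _ Equiv.subtypePiEquivPi.symm

noncomputable def toEvent [Fintype S.V] (v : Assignment S) : Event S :=
  Event.bigAnd (Finset.univ.toList.map fun X => Event.prim X (v.1 X) (v.2 X))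

theorem evalB_toEvent [Fintype S.V] (v : Assignment S) (val : S.V → S.Val → Bool) :
    v.toEvent.evalB val = true ↔ ∀ X, val X (v.1 X) = true := by
  simp [toEvent, Event.evalB_bigAnd, Event.evalB]

def exclusions (v : Assignment S) : Set (Event S) :=
  {d | ∃ (X : S.V) (x : S.Val) (hx : x ∈ S.RV X), x ≠ v.1 X ∧
    d = Event.imp (Event.prim X (v.1 X) (v.2 X)) (Event.not (Event.prim X x hx))}

theorem finite_exclusions [Finite S.V] [∀ X, Finite (S.RV X)] (v : Assignment S) :
    v.exclusions.Finite :=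
  (Set.finite_range fun p : (X : S.V) × S.RV X =>
      Event.imp (Event.prim p.1 (v.1 p.1) (v.2 p.1)) (Event.not (Event.prim p.1 p.2 p.2.2))).subset
    (by rintro _ ⟨X, x, hx, -, rfl⟩; exact ⟨⟨X, x, hx⟩, rfl⟩)

theorem evalB_eq_true_iff_of_exclusions [Fintype S.V] {v : Assignment S}
    {val : S.V → S.Val → Bool} (hv : v.toEvent.evalB val = true)
    (hex : ∀ d ∈ v.exclusions, d.evalB val = true) (X : S.V) (x : S.Val) (hx : x ∈ S.RV X) :
    val X x = true ↔ v.1 X = x := by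
  have hvX := (v.evalB_toEvent val).mp hv X
  by_cases hxv : x = v.1 X
  · subst hxv; simpa using hvX
  · have hvx := hex _ ⟨X, x, hx, hxv, rfl⟩
    simp only [Event.imp, Event.evalB, hvX, Bool.not_true, Bool.false_or,
      Bool.not_eq_eq_eq_not] at hvx
    simp [hvx, Ne.symm hxv]

end Assignment

namespace MaxConsistent

variable {I : S.V → Option S.Val} {hI : I ∈ S.Int}

theorem box_of_mem_exclusions (hAx : AXbasic S ⊆ Ax) (hΓ : MaxConsistent (Provable Ax) Γ)
    {v : Assignment S} {d : Event S} (hd : d ∈ v.exclusions) : CForm.box I hI d ∈ Γ := by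
  obtain ⟨X, x, hx, hne, rfl⟩ := hd
  exact hΓ.mem_of_mem_AXbasic hAx (by
    simp [AXbasic, show _ ∈ AxD1 S from ⟨I, hI, X, _, x, v.2 X, hx, Ne.symm hne, rfl⟩])

theorem sat_of_dia_toEvent_and [Fintype S.V] [∀ X, Finite (S.RV X)]
    (hAx : AXbasic S ⊆ Ax) (hΓ : MaxConsistent (Provable Ax) Γ) {v : Assignment S}
    {e : Event S} (hd : CForm.dia I hI (Event.and v.toEvent e) ∈ Γ) : e.sat v := by
  obtain ⟨val, hval, hex⟩ := hΓ.exists_evalB_of_dia hAx hd v.finite_exclusions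
    fun _ => hΓ.box_of_mem_exclusions hAx
  simp only [Event.evalB, Bool.and_eq_true] at hval
  exact (Event.evalB_eq_true_iff_sat (v.evalB_eq_true_iff_of_exclusions hval.1 hex) e).mp
    hval.2

theorem exists_dia_toEvent_and [Fintype S.V] [∀ X, Finite (S.RV X)]
    (hAx : AXbasic S ⊆ Ax) (hΓ : MaxConsistent (Provable Ax) Γ) {g : Event S}
    (hd : CForm.dia I hI g ∈ Γ) :
    ∃ v : Assignment S, CForm.dia I hI (Event.and v.toEvent g) ∈ Γ := by
  by_contra! h
  choose lR _ hlR using fun X => Finite.exists_univ_list (S.RV X)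
  let s := Set.range (fun v : Assignment S => Event.not (Event.and v.toEvent g)) ∪
    Set.range fun X => Event.disjEq X (lR X)
  have hbox : ∀ b ∈ s, CForm.box I hI b ∈ Γ := by
    rintro _ (⟨v, rfl⟩ | ⟨X, rfl⟩)
    · exact (hΓ.mem_or_not_mem (AxD0_subset_AXbasic.trans hAx) _).resolve_right (h v)
    · exact hΓ.mem_of_mem_AXbasic hAx (by
        simp [AXbasic, show _ ∈ AxD2 S from ⟨I, hI, X, lR X, hlR X, rfl⟩])
  obtain ⟨val, hg, hval⟩ := hΓ.exists_evalB_of_dia hAx hd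
    ((Set.finite_range _).union (Set.finite_range _)) hbox
  have hdef : ∀ X, ∃ x : S.RV X, val X x = true := by
    intro X
    obtain ⟨x, ⟨hx, -⟩, hvx⟩ := by
      simpa [Event.disjEq, Event.evalB_bigOr, Event.evalB] using hval _ (.inr ⟨X, rfl⟩)
    exact ⟨⟨x, hx⟩, hvx⟩
  choose w hw using hdef
  have hw' := hval _ (.inl ⟨⟨fun X => w X, fun X => (w X).2⟩, rfl⟩)
  simp only [Event.evalB, hg, Bool.and_true, Bool.not_eq_true', ← Bool.not_eq_true] at hw'
  exact hw' ((Assignment.evalB_toEvent _ val).mpr hw)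

end MaxConsistent

noncomputable def canonicalModel [Fintype S.V] [∀ X, Finite (S.RV X)]
    (hAx : AXbasic S ⊆ Ax) (hΓ : MaxConsistent (Provable Ax) Γ) : GSEM S where
  F I hI _ := {v | CForm.dia I hI v.toEvent ∈ Γ}
  effective I hI _ v hv X x hIX := by
    have hx := S.Int_ok I hI X x hIX
    have hD4 : CForm.box I hI (Event.prim X x hx) ∈ Γ :=
      hΓ.mem_of_mem_AXbasic hAx (by
        simp [AXbasic, show _ ∈ AxD4 S from ⟨I, hI, X, x, hx, hIX, rfl⟩])
    refine hΓ.sat_of_dia_toEvent_and hAx (e := Event.prim X x hx)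
      (hΓ.dia_of_entails hAx hv (Set.finite_singleton _) (by simpa using hD4) ?_)
    simp_all [Event.evalB]

theorem canonicalModel_sat_iff [Fintype S.V] [∀ X, Finite (S.RV X)]
    (hAx : AXbasic S ⊆ Ax) (hΓ : MaxConsistent (Provable Ax) Γ) (u : Context S)
    (φ : CForm S) : (canonicalModel hAx hΓ).sat u φ ↔ φ ∈ Γ := by
  have h0 := AxD0_subset_AXbasic.trans hAx
  induction φ with
  | tru => exact iff_of_true trivial (hΓ.mem_of_entails h0 (l := []) (by simp) fun _ _ => rfl)
  | box I hI e =>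
    refine ⟨fun hsat => ?_, fun hbox v hv => ?_⟩
    · by_contra hbox
      have hdia : CForm.dia I hI (Event.not e) ∈ Γ := (hΓ.not_mem_iff h0).mpr fun hnn =>
        hbox (hΓ.box_of_entails hAx (Set.finite_singleton _) (by simpa using hnn)
          fun val => by simp [Event.evalB])
      obtain ⟨v, hv⟩ := hΓ.exists_dia_toEvent_and hAx hdia
      have hv' : CForm.dia I hI v.toEvent ∈ Γ :=
        hΓ.dia_of_entails hAx hv Set.finite_empty (by simp) fun val h _ => by
          simp_all [Event.evalB]
      exact hΓ.sat_of_dia_toEvent_and hAx hv (hsat v hv')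
    · exact hΓ.sat_of_dia_toEvent_and hAx (hΓ.dia_of_entails hAx hv
        (Set.finite_singleton _) (by simpa using hbox) fun val => by simp_all [Event.evalB])
  | not φ ih => exact (not_congr ih).trans (hΓ.not_mem_iff h0).symm
  | and a b iha ihb => exact (and_congr iha ihb).trans (hΓ.and_mem_iff h0).symm
  | or a b iha ihb => exact (or_congr iha ihb).trans (hΓ.or_mem_iff h0).symm

theorem provable_of_forall_valid [Finite S.V] [∀ X, Finite (S.RV X)]
    (hAx : AXbasic S ⊆ Ax) {φ : CForm S}
    (h : ∀ M : GSEM S, (∀ ψ ∈ Ax, M.Valid ψ) → M.Valid φ) : Provable Ax φ := by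
  have := Fintype.ofFinite S.V
  have h0 := AxD0_subset_AXbasic.trans hAx
  by_contra hφ
  obtain ⟨Γ, hΓ, hnφ⟩ := exists_maxConsistent_of_not_provable h0 hφ
  have hM : ∀ ψ ∈ Ax, (canonicalModel hAx hΓ).Valid ψ := fun ψ hψ u =>
    (canonicalModel_sat_iff hAx hΓ u ψ).mpr (hΓ.mem_of_provable h0 (.ax hψ))
  let u : Context S := ⟨fun Y => (S.RU_nonempty Y).some, fun Y => (S.RU_nonempty Y).some_mem⟩
  exact (hΓ.not_mem_iff h0).mp hnφ ((canonicalModel_sat_iff hAx hΓ u φ).mp (h _ hM u))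

theorem GSEM.valid_of_provable {M : GSEM S} (hM : ∀ ψ ∈ Ax, M.Valid ψ) {φ : CForm S}
    (h : Provable Ax φ) : M.Valid φ := by
  induction h with
  | ax hφ => exact hM _ hφ
  | mp _ _ ihab iha => exact fun u => (ihab u).resolve_left (not_not.mpr (iha u))

theorem axplus_sound_complete_GSEM_satisfying_axplus_general (S : Signature)
    (hfin : S.IsFinite) (φ : CForm S) :
    Provable (AXplus S) φ ↔
      ∀ M : GSEM S, (∀ ψ ∈ AXplus S, M.Valid ψ) → M.Valid φ := by
  have : Finite S.V := hfin.2.1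
  have (X : S.V) : Finite (S.RV X) := (hfin.2.2.2 X).to_subtype
  exact ⟨fun h _ hM => GSEM.valid_of_provable hM h, provable_of_forall_valid AXbasic_subset_AXplus⟩

/-- If `S` is a finite universal signature, then `AX⁺(S)` is
sound and complete for `L(S)` with respect to the class of finite GSEMs over
`S` in which every instance of the axioms of `AX⁺(S)` is valid. -/
theorem axplus_sound_complete_GSEM_satisfying_axplus (S : Signature)
    (hfin : S.IsFinite) (huniv : S.Universal) (φ : CForm S) :
    Provable (AXplus S) φ ↔
      ∀ M : GSEM S, (∀ ψ ∈ AXplus S, M.Valid ψ) → M.Valid φ :=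
  axplus_sound_complete_GSEM_satisfying_axplus_general S hfin φ

end Causal
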